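/- arXiv:2403.03672 — 5 statements merged into one kernel-verified Lean document; each statement's English description precedes it below -/
import Mathlib

section
/- Let q, q̂, ḡ, ĝ, ξ ∈ ℝⁿ and α ∈ ℝ satisfy, componentwise, q ≥ 0, q̂ ≥ 0, ξ ≥ 0, 0 ≤ ḡ ≤ 1, and |ĝ_i − ḡ_i| ≤ ξ_i for every i; suppose moreover that (ĝ − ξ)·q̂ ≤ α. Then max{ḡ·q − α, 0} ≤ ‖q − q̂‖₁ + 2 ξ·q̂, where ‖v‖₁ denotes ∑_i |v_i| and · denotes the Euclidean inner product. -/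
open Finset

theorem stmt_1 (n : ℕ) (q qhat gbar ghat ξ : Fin n → ℝ) (α : ℝ)
    (hq : ∀ i, 0 ≤ q i) (hqhat : ∀ i, 0 ≤ qhat i) (hξ : ∀ i, 0 ≤ ξ i)
    (hg0 : ∀ i, 0 ≤ gbar i) (hg1 : ∀ i, gbar i ≤ 1)
    (hconf : ∀ i, |ghat i - gbar i| ≤ ξ i)
    (hproj : ∑ i, (ghat i - ξ i) * qhat i ≤ α) :
    max (∑ i, gbar i * q i - α) 0 ≤
      (∑ i, |q i - qhat i|) + 2 * ∑ i, ξ i * qhat i := by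
  have hRHS : 0 ≤ (∑ i, |q i - qhat i|) + 2 * ∑ i, ξ i * qhat i := by
    have h1 : 0 ≤ ∑ i, |q i - qhat i| := Finset.sum_nonneg fun i _ => abs_nonneg _
    have h2 : 0 ≤ ∑ i, ξ i * qhat i :=
      Finset.sum_nonneg fun i _ => mul_nonneg (hξ i) (hqhat i)
    linarith
  rw [max_le_iff]
  refine ⟨?_, hRHS⟩
  have key : ∑ i, gbar i * q i - α ≤
      ∑ i, (gbar i * (q i - qhat i) + (gbar i - ghat i + ξ i) * qhat i) := by
    have e : (∑ i, (gbar i * (q i - qhat i) + (gbar i - ghat i + ξ i) * qhat i))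
        + ∑ i, (ghat i - ξ i) * qhat i = ∑ i, gbar i * q i := by
      rw [← Finset.sum_add_distrib]
      apply Finset.sum_congr rfl
      intro i _; ring
    linarith
  refine key.trans ?_
  rw [Finset.mul_sum, ← Finset.sum_add_distrib]
  apply Finset.sum_le_sum
  intro i _
  have h1 : gbar i * (q i - qhat i) ≤ |q i - qhat i| := by
    rcases le_total 0 (q i - qhat i) with h | h
    · calc gbar i * (q i - qhat i) ≤ 1 * (q i - qhat i) := by
            exact mul_le_mul_of_nonneg_right (hg1 i) h
      _ ≤ |q i - qhat i| := by rw [one_mul]; exact le_abs_self _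
    · have := mul_nonpos_of_nonneg_of_nonpos (hg0 i) h
      exact this.trans (abs_nonneg _)
  have h2 : (gbar i - ghat i + ξ i) * qhat i ≤ (ξ i + ξ i) * qhat i := by
    apply mul_le_mul_of_nonneg_right _ (hqhat i)
    have := abs_le.mp (hconf i)
    linarith
  have : (ξ i + ξ i) * qhat i = 2 * (ξ i * qhat i) := by ring
  linarith [h2]
end

section
/- Let q, q̂, ḡ, ĝ, ξ ∈ ℝⁿ and α ∈ ℝ satisfy, componentwise, q ≥ 0, q̂ ≥ 0, 0 ≤ ξ ≤ 1, 0 ≤ ḡ ≤ 1, and |ĝ_i − ḡ_i| ≤ ξ_i for every i; suppose moreover that (ĝ − ξ)·q̂ ≤ α. Then max{ḡ·q − α, 0} ≤ 3‖q − q̂‖₁ + 2 ξ·q, where ‖v‖₁ denotes ∑_i |v_i| and · denotes the Euclidean inner product. -/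
open Finset

theorem stmt_2 (n : ℕ) (q qhat gbar ghat ξ : Fin n → ℝ) (α : ℝ)
    (hq : ∀ i, 0 ≤ q i) (hqhat : ∀ i, 0 ≤ qhat i)
    (hξ0 : ∀ i, 0 ≤ ξ i) (hξ1 : ∀ i, ξ i ≤ 1)
    (hg0 : ∀ i, 0 ≤ gbar i) (hg1 : ∀ i, gbar i ≤ 1)
    (hconf : ∀ i, |ghat i - gbar i| ≤ ξ i)
    (hproj : ∑ i, (ghat i - ξ i) * qhat i ≤ α) :
    max (∑ i, gbar i * q i - α) 0 ≤
      3 * (∑ i, |q i - qhat i|) + 2 * ∑ i, ξ i * q i := by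
  have hrhs : 0 ≤ 3 * (∑ i, |q i - qhat i|) + 2 * ∑ i, ξ i * q i := by
    have h1 : 0 ≤ ∑ i, |q i - qhat i| := Finset.sum_nonneg fun i _ => abs_nonneg _
    have h2 : 0 ≤ ∑ i, ξ i * q i :=
      Finset.sum_nonneg fun i _ => mul_nonneg (hξ0 i) (hq i)
    linarith
  apply max_le _ hrhs
  have key : ∑ i, gbar i * q i - ∑ i, (ghat i - ξ i) * qhat i ≤
      3 * (∑ i, |q i - qhat i|) + 2 * ∑ i, ξ i * q i := by
    rw [← Finset.sum_sub_distrib, Finset.mul_sum, Finset.mul_sum, ← Finset.sum_add_distrib]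
    apply Finset.sum_le_sum
    intro i _
    have h1 := abs_le.mp (hconf i)
    have h2 := abs_le.mp (le_refl |q i - qhat i|)
    have h3 := le_abs_self (q i - qhat i)
    have h4 := neg_abs_le (q i - qhat i)
    nlinarith [hq i, hqhat i, hξ0 i, hξ1 i, hg0 i, hg1 i, abs_nonneg (q i - qhat i)]
  linarith
end

section
/- Let L, α, β, w, v, s be real numbers with 0 ≤ w ≤ β < α ≤ L, 0 ≤ v, v ≤ L and v ≤ s. Define m := min{s, L} and λ := (m − α)/(m − β) if m > α, and λ := 0 otherwise. Then 0 ≤ λ ≤ (L − α)/(L − β) < 1 and λ·w + (1 − λ)·v ≤ α. -/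
theorem stmt_3 (L α β w v s : ℝ)
    (hw0 : 0 ≤ w) (hwβ : w ≤ β) (hβα : β < α) (hαL : α ≤ L)
    (hv0 : 0 ≤ v) (hvL : v ≤ L) (hvs : v ≤ s) :
    let m := min s L
    let lam := if m > α then (m - α) / (m - β) else 0
    0 ≤ lam ∧ lam ≤ (L - α) / (L - β) ∧ (L - α) / (L - β) < 1 ∧
      lam * w + (1 - lam) * v ≤ α := by
  intro m lam
  have hvm : v ≤ m := le_min hvs hvL
  have hmL : m ≤ L := min_le_right _ _
  have hLβ : (0:ℝ) < L - β := by linarith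
  have hfrac : (L - α) / (L - β) < 1 := by
    rw [div_lt_one hLβ]; linarith
  by_cases h : m > α
  · have hmβ : (0:ℝ) < m - β := by linarith
    have hlam : lam = (m - α) / (m - β) := if_pos h
    have h0 : 0 ≤ lam := by
      rw [hlam]; exact div_nonneg (by linarith) hmβ.le
    have hkey : lam * (m - β) = m - α := by
      rw [hlam]; field_simp
    have h1 : lam ≤ 1 := by
      rw [hlam, div_le_one hmβ]; linarith
    refine ⟨h0, ?_, hfrac, ?_⟩
    · rw [hlam, div_le_div_iff₀ hmβ hLβ]
      nlinarith [mul_nonneg (sub_nonneg.2 hmL) (sub_nonneg.2 hβα.le)]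
    · nlinarith [mul_le_mul_of_nonneg_left hwβ h0,
        mul_le_mul_of_nonneg_left hvm (by linarith : (0:ℝ) ≤ 1 - lam)]
  · have hlam : lam = 0 := if_neg h
    refine ⟨by rw [hlam], ?_, hfrac, ?_⟩
    · rw [hlam]; exact div_nonneg (by linarith) hLβ.le
    · rw [hlam]; push_neg at h; simp; linarith
end

section
/- Let ḡ, ĝ, ξ, q, u ∈ ℝⁿ satisfy, componentwise, 0 ≤ ḡ ≤ ĝ + ξ and 0 ≤ q ≤ u, and let L, α, β, w ∈ ℝ with 0 ≤ w ≤ β < α ≤ L and ḡ·q ≤ L. Define s := (ĝ + ξ)·u, m := min{s, L}, and λ := (m − α)/(m − β) if m > α, λ := 0 otherwise. Then λ·w + (1 − λ)·(ḡ·q) ≤ α. -/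
open Finset

theorem stmt_4 (n : ℕ) (gbar ghat ξ q u : Fin n → ℝ)
    (hg0 : ∀ i, 0 ≤ gbar i) (hgle : ∀ i, gbar i ≤ ghat i + ξ i)
    (hq0 : ∀ i, 0 ≤ q i) (hqu : ∀ i, q i ≤ u i)
    (L α β w : ℝ)
    (hw0 : 0 ≤ w) (hwβ : w ≤ β) (hβα : β < α) (hαL : α ≤ L)
    (hgq : ∑ i, gbar i * q i ≤ L) :
    let s := ∑ i, (ghat i + ξ i) * u i
    let m := min s L
    let lam := if m > α then (m - α) / (m - β) else 0
    lam * w + (1 - lam) * (∑ i, gbar i * q i) ≤ α := by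
  intro s m lam
  have hGs : ∑ i, gbar i * q i ≤ s := by
    apply Finset.sum_le_sum
    intro i _
    exact mul_le_mul (hgle i) (hqu i) (hq0 i) (le_trans (hg0 i) (hgle i))
  have hGm : ∑ i, gbar i * q i ≤ m := le_min hGs hgq
  by_cases hmα : m > α
  · have hmβ : (0:ℝ) < m - β := by linarith
    have hlam : lam = (m - α) / (m - β) := if_pos hmα
    have hlam0 : 0 ≤ lam := by
      rw [hlam]; apply div_nonneg <;> linarith
    have hlam1 : lam ≤ 1 := by
      rw [hlam, div_le_one hmβ]; linarith
    have h1 : lam * w ≤ lam * β := mul_le_mul_of_nonneg_left hwβ hlam0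
    have h2 : (1 - lam) * (∑ i, gbar i * q i) ≤ (1 - lam) * m :=
      mul_le_mul_of_nonneg_left hGm (by linarith)
    have hkey : lam * β + (1 - lam) * m = α := by
      rw [hlam]; field_simp; ring
    linarith
  · have hlam : lam = 0 := if_neg hmα
    rw [hlam]
    push_neg at hmα
    simpa using le_trans hGm hmα
end

section
/- Let α, β ∈ ℝ with β < α, and let ĝ, ξ, q̂, û ∈ ℝⁿ satisfy, componentwise, 0 ≤ ĝ ≤ 1, ξ ≥ 0, and 0 ≤ q̂ ≤ û. Suppose (ĝ − ξ)·q̂ ≤ α and (ĝ + ξ)·û > α. Then ((ĝ + ξ)·û − α) / ((ĝ + ξ)·û − β) ≤ (∑_i (û_i − q̂_i) + 2 ξ·û) / (α − β). -/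
open Finset

theorem stmt_6 (n : ℕ) (α β : ℝ) (hβα : β < α)
    (ghat ξ qhat uhat : Fin n → ℝ)
    (hg0 : ∀ i, 0 ≤ ghat i) (hg1 : ∀ i, ghat i ≤ 1)
    (hξ : ∀ i, 0 ≤ ξ i)
    (hq0 : ∀ i, 0 ≤ qhat i) (hqu : ∀ i, qhat i ≤ uhat i)
    (hproj : ∑ i, (ghat i - ξ i) * qhat i ≤ α)
    (hgt : ∑ i, (ghat i + ξ i) * uhat i > α) :
    ((∑ i, (ghat i + ξ i) * uhat i) - α) / ((∑ i, (ghat i + ξ i) * uhat i) - β) ≤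
      ((∑ i, (uhat i - qhat i)) + 2 * ∑ i, ξ i * uhat i) / (α - β) := by
  set S := ∑ i, (ghat i + ξ i) * uhat i with hS
  have hαβ : (0:ℝ) < α - β := by linarith
  have h1 : (S - α) / (S - β) ≤ (S - α) / (α - β) := by
    apply div_le_div_of_nonneg_left (by linarith) hαβ (by linarith)
  refine h1.trans (div_le_div_of_nonneg_right ?_ hαβ.le)
  have key : S - ∑ i, (ghat i - ξ i) * qhat i ≤
      (∑ i, (uhat i - qhat i)) + 2 * ∑ i, ξ i * uhat i := by
    rw [hS, ← Finset.sum_sub_distrib, Finset.mul_sum, ← Finset.sum_add_distrib]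
    apply Finset.sum_le_sum
    intro i _
    have h2 : ghat i * (uhat i - qhat i) ≤ 1 * (uhat i - qhat i) :=
      mul_le_mul_of_nonneg_right (hg1 i) (by linarith [hqu i])
    have h3 : ξ i * qhat i ≤ ξ i * uhat i :=
      mul_le_mul_of_nonneg_left (hqu i) (hξ i)
    nlinarith [h2, h3]
  linarith
end
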